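/- Fix an even integer n = 2a with a ≥ 1. The Pareto front of the four-objective maximization problem AOAZ over x ∈ {0,1}^n is exactly the set {(j, n − j, j, n/2) : j ∈ {0, …, n/2}} ∪ {(n/2, i, n − i, i) : i ∈ {0, …, n/2}}, and it has cardinality n + 1. -/
import Mathlib


/-- Number of ones in the second half of `x` (indices `a ≤ i < 2a`). -/
def f11 (a : ℕ) (x : Fin (2 * a) → Bool) : ℕ :=
  ∑ i : Fin (2 * a), if a ≤ (i : ℕ) ∧ x i = true then 1 else 0

/-- Ones in the first half plus zeros in the second half. -/
def f12 (a : ℕ) (x : Fin (2 * a) → Bool) : ℕ :=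
  ∑ i : Fin (2 * a),
    if ((i : ℕ) < a ∧ x i = true) ∨ (a ≤ (i : ℕ) ∧ x i = false) then 1 else 0

/-- Zeros in the first half plus ones in the second half. -/
def f21 (a : ℕ) (x : Fin (2 * a) → Bool) : ℕ :=
  ∑ i : Fin (2 * a),
    if ((i : ℕ) < a ∧ x i = false) ∨ (a ≤ (i : ℕ) ∧ x i = true) then 1 else 0

/-- Number of ones in the first half of `x` (indices `i < a`). -/
def f22 (a : ℕ) (x : Fin (2 * a) → Bool) : ℕ :=
  ∑ i : Fin (2 * a), if (i : ℕ) < a ∧ x i = true then 1 else 0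

def AOAZ (a : ℕ) (x : Fin (2 * a) → Bool) : ℕ × ℕ × ℕ × ℕ :=
  (f11 a x, f12 a x, f21 a x, f22 a x)

/-- `u` dominates `v` for four-objective maximization. -/
def dominates4 (u v : ℕ × ℕ × ℕ × ℕ) : Prop :=
  (v.1 ≤ u.1 ∧ v.2.1 ≤ u.2.1 ∧ v.2.2.1 ≤ u.2.2.1 ∧ v.2.2.2 ≤ u.2.2.2) ∧ u ≠ v

/-- Pareto set (maximization) of `AOAZ` on bit strings of length `2a`. -/
def paretoSetAOAZ (a : ℕ) : Set (Fin (2 * a) → Bool) :=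
  {x | ¬ ∃ y : Fin (2 * a) → Bool, dominates4 (AOAZ a y) (AOAZ a x)}

namespace AOAZaux

lemma sum_fin (n : ℕ) (p : ℕ → Prop) [DecidablePred p] :
    (∑ i : Fin n, if p (i:ℕ) then 1 else 0) = ((Finset.range n).filter p).card := by
  rw [Finset.card_filter]
  exact Fin.sum_univ_eq_sum_range (fun i => if p i then 1 else 0) n

lemma sum_lt (n s : ℕ) (h : s ≤ n) :
    (∑ i : Fin n, if (i:ℕ) < s then 1 else 0) = s := by
  rw [sum_fin n (fun i => i < s)]
  have : (Finset.range n).filter (fun i => i < s) = Finset.range s := by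
    ext i; simp [Finset.mem_filter]; omega
  rw [this, Finset.card_range]

lemma sum_ge (a : ℕ) :
    (∑ i : Fin (2*a), if a ≤ (i:ℕ) then 1 else 0) = a := by
  rw [sum_fin]
  have : (Finset.range (2*a)).filter (fun i => a ≤ i) = Finset.Ico a (2*a) := by
    ext i; simp [Finset.mem_filter, Finset.mem_Ico]; omega
  rw [this, Nat.card_Ico]; omega

lemma sum_ico (n a b : ℕ) (h : b ≤ n) :
    (∑ i : Fin n, if a ≤ (i:ℕ) ∧ (i:ℕ) < b then 1 else 0) = b - a := by
  rw [sum_fin n (fun i => a ≤ i ∧ i < b)]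
  have : (Finset.range n).filter (fun i => a ≤ i ∧ i < b) = Finset.Ico a b := by
    ext i; simp [Finset.mem_filter, Finset.mem_Ico]; omega
  rw [this, Nat.card_Ico]

lemma f11_le (a : ℕ) (x : Fin (2*a) → Bool) : f11 a x ≤ a := by
  calc f11 a x ≤ ∑ i : Fin (2*a), if a ≤ (i:ℕ) then 1 else 0 := by
        rw [f11]
        apply Finset.sum_le_sum
        intro i _
        split_ifs with h1 h2 <;> simp_all
    _ = a := sum_ge a

lemma f22_le (a : ℕ) (x : Fin (2*a) → Bool) : f22 a x ≤ a := by
  calc f22 a x ≤ ∑ i : Fin (2*a), if (i:ℕ) < a then 1 else 0 := by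
        rw [f22]
        apply Finset.sum_le_sum
        intro i _
        split_ifs with h1 h2 <;> simp_all
    _ = a := sum_lt (2*a) a (by omega)

lemma id1 (a : ℕ) (x : Fin (2*a) → Bool) : f12 a x + f11 a x = a + f22 a x := by
  have key : f12 a x + f11 a x
      = (∑ i : Fin (2*a), if a ≤ (i:ℕ) then 1 else 0) + f22 a x := by
    rw [f12, f11, f22, ← Finset.sum_add_distrib, ← Finset.sum_add_distrib]
    refine Finset.sum_congr rfl fun i _ => ?_
    by_cases h : a ≤ (i:ℕ) <;> cases hx : x i <;> simp [h, hx] <;> omega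
  rw [key, sum_ge]

lemma id2 (a : ℕ) (x : Fin (2*a) → Bool) : f21 a x + f22 a x = a + f11 a x := by
  have key : f21 a x + f22 a x
      = (∑ i : Fin (2*a), if (i:ℕ) < a then 1 else 0) + f11 a x := by
    rw [f21, f11, f22, ← Finset.sum_add_distrib, ← Finset.sum_add_distrib]
    refine Finset.sum_congr rfl fun i _ => ?_
    by_cases h : a ≤ (i:ℕ) <;> cases hx : x i <;> simp [h, hx] <;> omega
  rw [key, sum_lt (2*a) a (by omega)]

/-- bit string with `s` ones in the first half and `t` ones in the second half. -/
def xST (a s t : ℕ) : Fin (2*a) → Bool :=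
  fun i => if (i:ℕ) < a then decide ((i:ℕ) < s) else decide ((i:ℕ) < a + t)

lemma f22_xST (a s t : ℕ) (hs : s ≤ a) : f22 a (xST a s t) = s := by
  have e : ∀ i : Fin (2*a),
      (if (i:ℕ) < a ∧ xST a s t i = true then 1 else 0) =
      (if (i:ℕ) < s then (1:ℕ) else 0) := by
    intro i
    by_cases h2 : (i:ℕ) < s
    · have h : (i:ℕ) < a := lt_of_lt_of_le h2 hs
      simp [xST, h, h2]
    · by_cases h : (i:ℕ) < a <;> simp [xST, h, h2]
  rw [f22, Finset.sum_congr rfl (fun i _ => e i)]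
  exact sum_lt _ _ (by omega)

lemma f11_xST (a s t : ℕ) (ht : t ≤ a) : f11 a (xST a s t) = t := by
  have e : ∀ i : Fin (2*a),
      (if a ≤ (i:ℕ) ∧ xST a s t i = true then 1 else 0) =
      (if a ≤ (i:ℕ) ∧ (i:ℕ) < a + t then (1:ℕ) else 0) := by
    intro i
    by_cases h : a ≤ (i:ℕ)
    · have h' : ¬ ((i:ℕ) < a) := by omega
      by_cases h2 : (i:ℕ) < a + t <;> simp [xST, h, h', h2]
    · simp [h]
  rw [f11, Finset.sum_congr rfl (fun i _ => e i), sum_ico (2*a) a (a+t) (by omega)]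
  omega

lemma pareto_iff (a : ℕ) (x : Fin (2*a) → Bool) :
    x ∈ paretoSetAOAZ a ↔ (f11 a x = a ∨ f22 a x = a) := by
  constructor
  · intro hx
    by_contra hc
    push_neg at hc
    obtain ⟨h1, h2⟩ := hc
    have ht : f11 a x < a := lt_of_le_of_ne (f11_le a x) h1
    have hs : f22 a x < a := lt_of_le_of_ne (f22_le a x) h2
    apply hx
    set y := xST a (f22 a x + 1) (f11 a x + 1) with hy
    have hy1 : f11 a y = f11 a x + 1 := f11_xST a _ _ (by omega)
    have hy2 : f22 a y = f22 a x + 1 := f22_xST a _ _ (by omega)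
    have ix1 := id1 a x
    have ix2 := id2 a x
    have iy1 := id1 a y
    have iy2 := id2 a y
    refine ⟨y, ?_, ?_⟩
    · simp only [AOAZ]
      exact ⟨by omega, by omega, by omega, by omega⟩
    · intro h
      simp only [AOAZ, Prod.mk.injEq] at h
      omega
  · intro h hex
    obtain ⟨y, ⟨⟨a1, a2, a3, a4⟩, hne⟩⟩ := hex
    simp only [AOAZ] at a1 a2 a3 a4
    have bx1 := f11_le a x
    have bx2 := f22_le a x
    have by1 := f11_le a y
    have by2 := f22_le a y
    have ix1 := id1 a x
    have ix2 := id2 a x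
    have iy1 := id1 a y
    have iy2 := id2 a y
    apply hne
    simp only [AOAZ, Prod.mk.injEq]
    omega

end AOAZaux

open AOAZaux in
theorem aoaz_pareto_front (a : ℕ) (ha : 1 ≤ a) :
    AOAZ a '' paretoSetAOAZ a =
      ({p | ∃ j ≤ a, p = (j, 2 * a - j, j, a)} ∪
       {p | ∃ i ≤ a, p = (a, i, 2 * a - i, i)} : Set (ℕ × ℕ × ℕ × ℕ)) ∧
    (AOAZ a '' paretoSetAOAZ a).ncard = 2 * a + 1 := by
  have hmain : AOAZ a '' paretoSetAOAZ a =
      ({p | ∃ j ≤ a, p = (j, 2 * a - j, j, a)} ∪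
       {p | ∃ i ≤ a, p = (a, i, 2 * a - i, i)} : Set (ℕ × ℕ × ℕ × ℕ)) := by
    ext p
    simp only [Set.mem_image, Set.mem_union, Set.mem_setOf_eq]
    constructor
    · rintro ⟨x, hx, rfl⟩
      have bx1 := f11_le a x
      have bx2 := f22_le a x
      have ix1 := id1 a x
      have ix2 := id2 a x
      rcases (pareto_iff a x).mp hx with h | h
      · right
        exact ⟨f22 a x, bx2, by simp only [AOAZ, Prod.mk.injEq, eq_self_iff_true, true_and, and_true]; omega⟩
      · left
        exact ⟨f11 a x, bx1, by simp only [AOAZ, Prod.mk.injEq, eq_self_iff_true, true_and, and_true]; omega⟩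
    · rintro (⟨j, hj, rfl⟩ | ⟨i, hi, rfl⟩)
      · refine ⟨xST a a j, (pareto_iff a _).mpr (Or.inr (f22_xST a a j le_rfl)), ?_⟩
        have h1 : f11 a (xST a a j) = j := f11_xST a a j hj
        have h2 : f22 a (xST a a j) = a := f22_xST a a j le_rfl
        have i1 := id1 a (xST a a j)
        have i2 := id2 a (xST a a j)
        simp only [AOAZ, Prod.mk.injEq, eq_self_iff_true, true_and, and_true]
        omega
      · refine ⟨xST a i a, (pareto_iff a _).mpr (Or.inl (f11_xST a i a le_rfl)), ?_⟩
        have h1 : f11 a (xST a i a) = a := f11_xST a i a le_rfl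
        have h2 : f22 a (xST a i a) = i := f22_xST a i a hi
        have i1 := id1 a (xST a i a)
        have i2 := id2 a (xST a i a)
        simp only [AOAZ, Prod.mk.injEq, eq_self_iff_true, true_and, and_true]
        omega
  refine ⟨hmain, ?_⟩
  rw [hmain]
  classical
  set A : Finset (ℕ × ℕ × ℕ × ℕ) := (Finset.Iic a).image fun j => (j, 2*a - j, j, a) with hA
  set B : Finset (ℕ × ℕ × ℕ × ℕ) := (Finset.Iic a).image fun i => (a, i, 2*a - i, i) with hB
  have hcoe : ({p | ∃ j ≤ a, p = (j, 2 * a - j, j, a)} ∪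
       {p | ∃ i ≤ a, p = (a, i, 2 * a - i, i)} : Set (ℕ × ℕ × ℕ × ℕ)) = ↑(A ∪ B) := by
    ext p
    simp [hA, hB, Finset.mem_union, Finset.mem_image, eq_comm]
  rw [hcoe, Set.ncard_coe_finset]
  have hcA : A.card = a + 1 := by
    rw [hA, Finset.card_image_of_injective _ (fun j j' h => by
      simpa using congrArg Prod.fst h), Nat.card_Iic]
  have hcB : B.card = a + 1 := by
    rw [hB, Finset.card_image_of_injective _ (fun i i' h => by
      simpa using congrArg (fun q => q.2.1) h), Nat.card_Iic]
  have hI : A ∩ B = {(a, a, a, a)} := by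
    ext p
    simp only [Finset.mem_inter, Finset.mem_image, Finset.mem_Iic, Finset.mem_singleton, hA, hB]
    constructor
    · rintro ⟨⟨j, hj, rfl⟩, ⟨i, hi, hpe⟩⟩
      simp only [Prod.mk.injEq, eq_self_iff_true, true_and, and_true] at hpe ⊢
      omega
    · rintro rfl
      have h2a : 2*a - a = a := by omega
      exact ⟨⟨a, le_rfl, by rw [h2a]⟩, ⟨a, le_rfl, by rw [h2a]⟩⟩
  have hcard := Finset.card_union_add_card_inter A B
  rw [hI, Finset.card_singleton] at hcard
  omega
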